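/- arXiv:2305.12340 — 2 statements merged into one kernel-verified Lean document; each statement's English description precedes it below -/
import Mathlib

section
/- Fix integers n ≥ 1 and N ≥ 2. Let (Θ, 𝒜, π) be a probability space, let θ ↦ ν_θ be a Markov kernel from Θ to the Borel probability measures on ℝ^n such that each ν_θ is absolutely continuous with respect to the Lebesgue measure, and let μ be the mixture μ(·) := ∫_Θ ν_θ^{⊗N}(·) dπ(θ) on (ℝ^n)^N (so the N components of X ∼ μ are conditionally i.i.d. given θ). Then for every measurable φ : [0,∞) → ℝ with ‖φ‖²_{L²(ρ)} := (1/(N(N−1))) Σ_{i ≠ j} ∫ φ(‖x_i − x_j‖)² ‖x_i − x_j‖² dμ(X) < ∞, one has ‖f_φ‖²_{L²(μ)} ≥ ((N−1)/N²) ‖φ‖²_{L²(ρ)}. -/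
/-!
Given `θ`, the particles are i.i.d. with law `ν_θ`; write `g x y = φ(‖y - x‖)(y - x)`.
Expanding `‖∑_{j ≠ i} g(X_i, X_j)‖²` gives diagonal terms, each with expectation the pair energy
`∫ ‖g‖² d(ν_θ ⊗ ν_θ)`, and cross terms `𝔼⟪g(X_i, X_j), g(X_i, X_k)⟫` with `i, j, k` distinct.
Conditionally on `X_i = a` the two vectors are independent copies of `g(a, Y)`, `Y ∼ ν_θ`, so
a cross term equals `∫ ‖∫ g(a, b) dν_θ(b)‖² dν_θ(a) ≥ 0`. Dropping the cross terms bounds the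
energy of the field under `ν_θ^{⊗N}` below by `N(N - 1)/N³ = (N - 1)/N²` times the pair energy,
and integrating in `θ` gives the bound for the mixture.
-/

open MeasureTheory Finset
open scoped ENNReal

noncomputable def interactionField (n N : ℕ) (φ : ℝ → ℝ)
    (X : Fin N → EuclideanSpace ℝ (Fin n)) (i : Fin N) : EuclideanSpace ℝ (Fin n) :=
  (N : ℝ)⁻¹ • ∑ j ∈ Finset.univ.erase i, φ ‖X j - X i‖ • (X j - X i)

open ProbabilityTheory
open scoped RealInnerProductSpace

section InnerProduct

variable {Ω E : Type*} [MeasurableSpace Ω] {μ : Measure Ω}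
  [NormedAddCommGroup E] [InnerProductSpace ℝ E]

theorem MeasureTheory.MemLp.integrable_inner {f g : Ω → E} (hf : MemLp f 2 μ)
    (hg : MemLp g 2 μ) : Integrable (fun ω => ⟪f ω, g ω⟫) μ :=
  (L2.integrable_inner (𝕜 := ℝ) hf.toLp hg.toLp).congr <| by
    filter_upwards [hf.coeFn_toLp, hg.coeFn_toLp] with ω hfω hgω
    rw [hfω, hgω]

theorem sum_integral_norm_sq_le_integral_norm_sum_sq {ι : Type*} {s : Finset ι}
    {Y : ι → Ω → E} (hY : ∀ j ∈ s, MemLp (Y j) 2 μ)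
    (hcorr : ∀ j ∈ s, ∀ k ∈ s, j ≠ k → 0 ≤ ∫ ω, ⟪Y j ω, Y k ω⟫ ∂μ) :
    ∑ j ∈ s, ∫ ω, ‖Y j ω‖ ^ 2 ∂μ ≤ ∫ ω, ‖∑ j ∈ s, Y j ω‖ ^ 2 ∂μ := by
  classical
  have hint : ∀ j ∈ s, ∀ k ∈ s, Integrable (fun ω => ⟪Y j ω, Y k ω⟫) μ :=
    fun j hj k hk => (hY j hj).integrable_inner (hY k hk)
  have hexpand : ∀ ω, ‖∑ j ∈ s, Y j ω‖ ^ 2 = ∑ j ∈ s, ∑ k ∈ s, ⟪Y j ω, Y k ω⟫ := fun ω => by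
    rw [← real_inner_self_eq_norm_sq, sum_inner]
    simp_rw [inner_sum]
  simp_rw [hexpand]
  rw [integral_finsetSum _ fun j hj => integrable_finsetSum _ (hint j hj)]
  refine sum_le_sum fun j hj => ?_
  rw [integral_finsetSum _ (hint j hj), ← add_sum_erase _ _ hj]
  simp_rw [real_inner_self_eq_norm_sq]
  exact le_add_of_nonneg_right <| sum_nonneg fun k hk =>
    hcorr j hj k (mem_of_mem_erase hk) (ne_of_mem_erase hk).symm

end InnerProduct

theorem Finset.sum_sum_erase_const {ι M : Type*} [Fintype ι] [DecidableEq ι] [AddCommMonoid M]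
    (c : M) : ∑ i : ι, ∑ _j ∈ univ.erase i, c = (Fintype.card ι * (Fintype.card ι - 1)) • c := by
  simp [sum_const, card_erase_of_mem, mul_nsmul']

theorem MeasureTheory.MeasurePreserving.integral_comp_of_aestronglyMeasurable
    {α β G : Type*} [MeasurableSpace α] [MeasurableSpace β] [NormedAddCommGroup G]
    [NormedSpace ℝ G] {μ : Measure α} {ν : Measure β} {f : α → β} (hf : MeasurePreserving f μ ν)
    {h : β → G} (hh : AEStronglyMeasurable h ν) : ∫ x, h (f x) ∂μ = ∫ y, h y ∂ν := by
  rw [← hf.map_eq] at hh ⊢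
  exact (integral_map hf.aemeasurable hh).symm

section Marginals

variable {α ι : Type*} [MeasurableSpace α] [Fintype ι] (ν : Measure α) [IsProbabilityMeasure ν]

theorem iIndepFun_pi_eval : iIndepFun (fun i (X : ι → α) => X i) (Measure.pi fun _ => ν) :=
  iIndepFun_pi (X := fun _ => id) fun _ => aemeasurable_id

theorem measurePreserving_pi_eval_prodMk {i j : ι} (hij : i ≠ j) :
    MeasurePreserving (fun X : ι → α => (X i, X j)) (Measure.pi fun _ => ν) (ν.prod ν) := by
  refine ⟨by fun_prop, ?_⟩
  rw [((iIndepFun_pi_eval ν).indepFun hij).map_prod_eq_prod_map_map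
    (measurable_pi_apply i).aemeasurable (measurable_pi_apply j).aemeasurable,
    (measurePreserving_eval _ i).map_eq, (measurePreserving_eval _ j).map_eq]

theorem measurePreserving_pi_eval_prodMk_prodMk {i j k : ι} (hij : i ≠ j) (hik : i ≠ k)
    (hjk : j ≠ k) :
    MeasurePreserving (fun X : ι → α => ((X j, X k), X i)) (Measure.pi fun _ => ν)
      ((ν.prod ν).prod ν) := by
  refine ⟨by fun_prop, ?_⟩
  rw [((iIndepFun_pi_eval ν).indepFun_prodMk measurable_pi_apply j k i hij.symm
      hik.symm).map_prod_eq_prod_map_map (by fun_prop) (measurable_pi_apply i).aemeasurable,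
    (measurePreserving_pi_eval_prodMk ν hjk).map_eq, (measurePreserving_eval _ i).map_eq]

end Marginals

section PairInteractions

variable {α ι E : Type*} [MeasurableSpace α] [Fintype ι] [NormedAddCommGroup E]
  (ν : Measure α) [IsProbabilityMeasure ν] {g : α → α → E}

theorem memLp_pi_eval_pair (hg : MemLp (Function.uncurry g) 2 (ν.prod ν)) {i j : ι}
    (hij : i ≠ j) : MemLp (fun X : ι → α => g (X i) (X j)) 2 (Measure.pi fun _ => ν) :=
  hg.comp_measurePreserving (measurePreserving_pi_eval_prodMk ν hij)

theorem integral_norm_sq_pi_eval_pair (hg : StronglyMeasurable (Function.uncurry g)) {i j : ι}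
    (hij : i ≠ j) :
    ∫ X : ι → α, ‖g (X i) (X j)‖ ^ 2 ∂(Measure.pi fun _ => ν) =
      ∫ p, ‖g p.1 p.2‖ ^ 2 ∂ν.prod ν :=
  (measurePreserving_pi_eval_prodMk ν hij).integral_comp_of_aestronglyMeasurable
    (h := fun p => ‖g p.1 p.2‖ ^ 2) (hg.norm.pow 2).aestronglyMeasurable

theorem memLp_sum_pi_eval_pair [DecidableEq ι] (hg : MemLp (Function.uncurry g) 2 (ν.prod ν))
    (i : ι) :
    MemLp (fun X : ι → α => ∑ j ∈ univ.erase i, g (X i) (X j)) 2 (Measure.pi fun _ => ν) :=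
  memLp_finsetSum _ fun _j hj => memLp_pi_eval_pair ν hg (ne_of_mem_erase hj).symm

variable [InnerProductSpace ℝ E] [CompleteSpace E]

theorem integral_inner_pi_eval_pair_nonneg (hg : StronglyMeasurable (Function.uncurry g))
    (hg2 : MemLp (Function.uncurry g) 2 (ν.prod ν)) {i j k : ι} (hij : i ≠ j) (hik : i ≠ k)
    (hjk : j ≠ k) :
    0 ≤ ∫ X : ι → α, ⟪g (X i) (X j), g (X i) (X k)⟫ ∂(Measure.pi fun _ => ν) := by
  have hT := measurePreserving_pi_eval_prodMk_prodMk ν hij hik hjk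
  set F : (α × α) × α → ℝ := fun w => ⟪g w.2 w.1.1, g w.2 w.1.2⟫
  have hF : StronglyMeasurable F :=
    (hg.comp_measurable (g := fun w : (α × α) × α => (w.2, w.1.1)) (by fun_prop)).inner
      (hg.comp_measurable (g := fun w : (α × α) × α => (w.2, w.1.2)) (by fun_prop))
  have hF_int : Integrable F ((ν.prod ν).prod ν) :=
    (hT.integrable_comp hF.aestronglyMeasurable).1
      ((memLp_pi_eval_pair ν hg2 hij).integrable_inner (memLp_pi_eval_pair ν hg2 hik))
  have hg_slice : ∀ᵐ a ∂ν, Integrable (g a) ν := by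
    filter_upwards [(hg2.integrable_norm_pow two_ne_zero).prod_right_ae] with a ha
    exact ((memLp_two_iff_integrable_sq_norm
      (hg.comp_measurable measurable_prodMk_left).aestronglyMeasurable).2 ha).integrable one_le_two
  rw [hT.integral_comp_of_aestronglyMeasurable (h := F) hF.aestronglyMeasurable,
    integral_prod_symm F hF_int]
  refine integral_nonneg_of_ae ?_
  filter_upwards [hg_slice] with a ha
  exact (integral_prod_bilin (innerSL ℝ) ha ha).symm ▸ real_inner_self_nonneg

theorem natCast_mul_integral_norm_sq_le_integral_sum_norm_sq [DecidableEq ι]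
    (hg : StronglyMeasurable (Function.uncurry g))
    (hg2 : MemLp (Function.uncurry g) 2 (ν.prod ν)) :
    ((Fintype.card ι * (Fintype.card ι - 1) : ℕ) : ℝ) * ∫ p, ‖g p.1 p.2‖ ^ 2 ∂ν.prod ν ≤
      ∫ X : ι → α, ∑ i, ‖∑ j ∈ univ.erase i, g (X i) (X j)‖ ^ 2 ∂(Measure.pi fun _ => ν) := by
  calc _ = ∑ i, ∑ j ∈ univ.erase i,
        ∫ X : ι → α, ‖g (X i) (X j)‖ ^ 2 ∂(Measure.pi fun _ => ν) := by
        rw [← nsmul_eq_mul, ← sum_sum_erase_const]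
        exact sum_congr rfl fun i _ => sum_congr rfl fun j hj =>
          (integral_norm_sq_pi_eval_pair ν hg (ne_of_mem_erase hj).symm).symm
    _ ≤ ∑ i, ∫ X : ι → α, ‖∑ j ∈ univ.erase i, g (X i) (X j)‖ ^ 2 ∂(Measure.pi fun _ => ν) :=
        sum_le_sum fun i _ => sum_integral_norm_sq_le_integral_norm_sum_sq
          (fun j hj => memLp_pi_eval_pair ν hg2 (ne_of_mem_erase hj).symm)
          fun j hj k hk hjk => integral_inner_pi_eval_pair_nonneg ν hg hg2
            (ne_of_mem_erase hj).symm (ne_of_mem_erase hk).symm hjk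
    _ = _ := (integral_finsetSum _ fun i _ =>
        (memLp_sum_pi_eval_pair ν hg2 i).integrable_norm_pow two_ne_zero).symm

end PairInteractions

section Kernels

variable {Θ α : Type*} [MeasurableSpace Θ] [MeasurableSpace α] {ν : Θ → Measure α}
  [∀ θ, IsProbabilityMeasure (ν θ)]

theorem Measurable.measure_pi {ι : Type*} [Fintype ι] (hν : Measurable ν) :
    Measurable fun θ => Measure.pi fun _ : ι => ν θ := by
  refine .measure_of_isPiSystem_of_isProbabilityMeasure generateFrom_pi.symm isPiSystem_pi ?_
  rintro _ ⟨s, hs, rfl⟩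
  simp_rw [Measure.pi_pi]
  exact Finset.measurable_prod _ fun i _ => (Measure.measurable_coe (hs i trivial)).comp hν

theorem Measurable.measure_prod_self (hν : Measurable ν) :
    Measurable fun θ => (ν θ).prod (ν θ) := by
  refine .measure_of_isPiSystem_of_isProbabilityMeasure generateFrom_prod.symm isPiSystem_prod ?_
  rintro _ ⟨s, hs, t, ht, rfl⟩
  simp_rw [Measure.prod_prod]
  exact ((Measure.measurable_coe hs).comp hν).mul ((Measure.measurable_coe ht).comp hν)

theorem lintegral_bind_pi_eval_prodMk {ι : Type*} [Fintype ι] (π : Measure Θ) (hν : Measurable ν)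
    {i j : ι} (hij : i ≠ j) {F : α × α → ℝ≥0∞} (hF : Measurable F) :
    ∫⁻ X, F (X i, X j) ∂(π.bind fun θ => Measure.pi fun _ => ν θ) =
      ∫⁻ θ, ∫⁻ p, F p ∂(ν θ).prod (ν θ) ∂π := by
  rw [Measure.lintegral_bind hν.measure_pi.aemeasurable (by fun_prop)]
  exact lintegral_congr fun θ => (measurePreserving_pi_eval_prodMk (ν θ) hij).lintegral_comp hF

end Kernels

section InteractionField

variable {E : Type*} [NormedAddCommGroup E] [NormedSpace ℝ E] {φ : ℝ → ℝ}

noncomputable def pairInteraction (φ : ℝ → ℝ) (x y : E) : E :=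
  φ ‖y - x‖ • (y - x)

theorem norm_pairInteraction_sq (φ : ℝ → ℝ) (x y : E) :
    ‖pairInteraction φ x y‖ ^ 2 = φ ‖x - y‖ ^ 2 * ‖x - y‖ ^ 2 := by
  rw [pairInteraction, norm_smul, mul_pow, Real.norm_eq_abs, sq_abs, norm_sub_rev]

theorem measurable_pairInteraction [MeasurableSpace E] [BorelSpace E] [SecondCountableTopology E]
    (hφ : Measurable φ) : Measurable (Function.uncurry (pairInteraction φ : E → E → E)) :=
  have hsub : Measurable fun p : E × E => p.2 - p.1 := measurable_snd.sub measurable_fst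
  (hφ.comp hsub.norm).smul hsub

theorem mul_lintegral_pairInteraction_le_lintegral_interactionField {n N : ℕ}
    (ν : Measure (EuclideanSpace ℝ (Fin n))) [IsProbabilityMeasure ν] (hφ : Measurable φ)
    (hfin : ∫⁻ p, ENNReal.ofReal (‖pairInteraction φ p.1 p.2‖ ^ 2) ∂ν.prod ν ≠ ⊤) :
    ((N - 1 : ℕ) : ℝ≥0∞) / (N : ℝ≥0∞) ^ 2 *
        ∫⁻ p, ENNReal.ofReal (‖pairInteraction φ p.1 p.2‖ ^ 2) ∂ν.prod ν ≤
      ∫⁻ X, ENNReal.ofReal ((N : ℝ)⁻¹ * ∑ i : Fin N, ‖interactionField n N φ X i‖ ^ 2)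
        ∂(Measure.pi fun _ => ν) := by
  set g : EuclideanSpace ℝ (Fin n) → EuclideanSpace ℝ (Fin n) → EuclideanSpace ℝ (Fin n) :=
    pairInteraction φ
  have hg : StronglyMeasurable (Function.uncurry g) :=
    (measurable_pairInteraction hφ).stronglyMeasurable
  have hg_sq : Integrable (fun p => ‖g p.1 p.2‖ ^ 2) (ν.prod ν) :=
    ⟨(hg.norm.pow 2).aestronglyMeasurable,
      (hasFiniteIntegral_iff_ofReal (ae_of_all _ fun _ => sq_nonneg _)).2 hfin.lt_top⟩
  have hg2 : MemLp (Function.uncurry g) 2 (ν.prod ν) :=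
    (memLp_two_iff_integrable_sq_norm hg.aestronglyMeasurable).2 hg_sq
  have hfield : ∀ X : Fin N → EuclideanSpace ℝ (Fin n),
      (N : ℝ)⁻¹ * ∑ i, ‖interactionField n N φ X i‖ ^ 2 =
        (N : ℝ)⁻¹ ^ 3 * ∑ i, ‖∑ j ∈ univ.erase i, g (X i) (X j)‖ ^ 2 := fun X => by
    simp_rw [interactionField, norm_smul, mul_pow, ← mul_sum, norm_inv, Real.norm_natCast,
      ← mul_assoc, ← pow_succ']
    rfl
  have hcoeff : ((N - 1 : ℕ) : ℝ≥0∞) / (N : ℝ≥0∞) ^ 2 =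
      ENNReal.ofReal (((N - 1 : ℕ) : ℝ) / (N : ℝ) ^ 2) := by
    rcases N.eq_zero_or_pos with rfl | hN
    · simp
    rw [ENNReal.ofReal_div_of_pos (by positivity), ENNReal.ofReal_natCast,
      ENNReal.ofReal_pow (by positivity), ENNReal.ofReal_natCast]
  simp_rw [hfield]
  rw [← ofReal_integral_eq_lintegral_ofReal hg_sq (ae_of_all _ fun _ => sq_nonneg _),
    ← ofReal_integral_eq_lintegral_ofReal
      ((integrable_finsetSum _ fun i _ =>
        (memLp_sum_pi_eval_pair ν hg2 i).integrable_norm_pow two_ne_zero).const_mul _)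
      (ae_of_all _ fun _ => by positivity),
    hcoeff, ← ENNReal.ofReal_mul (by positivity), integral_const_mul]
  refine ENNReal.ofReal_le_ofReal ?_
  calc ((N - 1 : ℕ) : ℝ) / (N : ℝ) ^ 2 * ∫ p, ‖g p.1 p.2‖ ^ 2 ∂ν.prod ν
      = (N : ℝ)⁻¹ ^ 3 * (((N * (N - 1) : ℕ) : ℝ) * ∫ p, ‖g p.1 p.2‖ ^ 2 ∂ν.prod ν) := by
        rcases N with _ | N
        · simp
        push_cast
        field_simp
    _ ≤ _ := by
        gcongr
        simpa only [Fintype.card_fin] using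
          natCast_mul_integral_norm_sq_le_integral_sum_norm_sq (ι := Fin N) ν hg hg2

end InteractionField

theorem interactionField_coercivity_conditionally_iid_general
    (n N : ℕ)
    {Θ : Type*} [MeasurableSpace Θ]
    (π : Measure Θ)
    (ν : Θ → Measure (EuclideanSpace ℝ (Fin n)))
    (hνmeas : Measurable ν)
    (hνprob : ∀ θ, IsProbabilityMeasure (ν θ))
    (μ : Measure (Fin N → EuclideanSpace ℝ (Fin n)))
    (hμ : μ = π.bind fun θ => Measure.pi fun _ : Fin N => ν θ)
    (φ : ℝ → ℝ) (hφ : Measurable φ)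
    (hρfin : ((N * (N - 1) : ℕ) : ℝ≥0∞)⁻¹ *
        ∑ i : Fin N, ∑ j ∈ Finset.univ.erase i,
          ∫⁻ X, ENNReal.ofReal ((φ ‖X i - X j‖) ^ 2 * ‖X i - X j‖ ^ 2) ∂μ ≠ ⊤) :
    ∫⁻ X, ENNReal.ofReal ((N : ℝ)⁻¹ * ∑ i : Fin N, ‖interactionField n N φ X i‖ ^ 2) ∂μ ≥
      (((N - 1 : ℕ) : ℝ≥0∞) / ((N : ℝ≥0∞) ^ 2)) *
        (((N * (N - 1) : ℕ) : ℝ≥0∞)⁻¹ *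
          ∑ i : Fin N, ∑ j ∈ Finset.univ.erase i,
            ∫⁻ X, ENNReal.ofReal ((φ ‖X i - X j‖) ^ 2 * ‖X i - X j‖ ^ 2) ∂μ) := by
  subst hμ
  have hF : Measurable fun p : EuclideanSpace ℝ (Fin n) × EuclideanSpace ℝ (Fin n) =>
      ENNReal.ofReal (‖pairInteraction φ p.1 p.2‖ ^ 2) :=
    ((measurable_pairInteraction hφ).norm.pow_const 2).ennreal_ofReal
  set e : Θ → ℝ≥0∞ := fun θ => ∫⁻ p, ENNReal.ofReal (‖pairInteraction φ p.1 p.2‖ ^ 2)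
    ∂(ν θ).prod (ν θ)
  have hpair : ∀ i : Fin N, ∀ j ∈ univ.erase i,
      ∫⁻ X, ENNReal.ofReal (φ ‖X i - X j‖ ^ 2 * ‖X i - X j‖ ^ 2)
        ∂(π.bind fun θ => Measure.pi fun _ => ν θ) = ∫⁻ θ, e θ ∂π := fun i j hj => by
    simp_rw [← norm_pairInteraction_sq]
    exact lintegral_bind_pi_eval_prodMk π hνmeas (ne_of_mem_erase hj).symm hF
  rw [sum_congr rfl fun i _ => sum_congr rfl (hpair i), sum_sum_erase_const, Fintype.card_fin,
    nsmul_eq_mul] at hρfin ⊢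
  rcases le_or_gt N 1 with hN | hN
  · -- the truncated `N - 1 : ℕ` is `0`, so the right-hand side vanishes
    simp [Nat.sub_eq_zero_of_le hN]
  have hpairs : ((N * (N - 1) : ℕ) : ℝ≥0∞) ≠ 0 :=
    Nat.cast_ne_zero.2 (Nat.mul_ne_zero (by omega) (by omega))
  rw [ENNReal.inv_mul_cancel_left hpairs (ENNReal.natCast_ne_top _)] at hρfin ⊢
  have he_fin : ∀ᵐ θ ∂π, e θ ≠ ⊤ :=
    (ae_lt_top ((Measure.measurable_lintegral hF).comp hνmeas.measure_prod_self) hρfin).mono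
      fun _ h => h.ne
  rw [Measure.lintegral_bind hνmeas.measure_pi.aemeasurable (by unfold interactionField; fun_prop),
    ← lintegral_const_mul' _ _ (ENNReal.div_ne_top (ENNReal.natCast_ne_top _) (by positivity))]
  exact lintegral_mono_ae (he_fin.mono fun θ hθ =>
    mul_lintegral_pairInteraction_le_lintegral_interactionField (ν θ) hφ hθ)

/-- coercivity `‖f_φ‖²_{L²(μ)} ≥ ((N−1)/N²) ‖φ‖²_{L²(ρ)}` when `μ` is a
mixture `μ = ∫ ν_θ^{⊗N} dπ(θ)` of i.i.d. laws, with each `ν_θ` absolutely continuous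
(the conditionally i.i.d. / de Finetti case). -/
theorem interactionField_coercivity_conditionally_iid
    (n N : ℕ) (hn : 1 ≤ n) (hN : 2 ≤ N)
    {Θ : Type*} [MeasurableSpace Θ]
    (π : Measure Θ) [IsProbabilityMeasure π]
    (ν : Θ → Measure (EuclideanSpace ℝ (Fin n)))
    (hνmeas : Measurable ν)
    (hνprob : ∀ θ, IsProbabilityMeasure (ν θ))
    (hνac : ∀ θ, ν θ ≪ volume)
    (μ : Measure (Fin N → EuclideanSpace ℝ (Fin n)))
    (hμ : μ = π.bind fun θ => Measure.pi fun _ : Fin N => ν θ)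
    (φ : ℝ → ℝ) (hφ : Measurable φ)
    (hρfin : ((N * (N - 1) : ℕ) : ℝ≥0∞)⁻¹ *
        ∑ i : Fin N, ∑ j ∈ Finset.univ.erase i,
          ∫⁻ X, ENNReal.ofReal ((φ ‖X i - X j‖) ^ 2 * ‖X i - X j‖ ^ 2) ∂μ ≠ ⊤) :
    ∫⁻ X, ENNReal.ofReal ((N : ℝ)⁻¹ * ∑ i : Fin N, ‖interactionField n N φ X i‖ ^ 2) ∂μ ≥
      (((N - 1 : ℕ) : ℝ≥0∞) / ((N : ℝ≥0∞) ^ 2)) *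
        (((N * (N - 1) : ℕ) : ℝ≥0∞)⁻¹ *
          ∑ i : Fin N, ∑ j ∈ Finset.univ.erase i,
            ∫⁻ X, ENNReal.ofReal ((φ ‖X i - X j‖) ^ 2 * ‖X i - X j‖ ^ 2) ∂μ) :=
  interactionField_coercivity_conditionally_iid_general n N π ν hνmeas hνprob μ hμ φ hφ hρfin
end

section
/- Fix integers n ≥ 1 and N ≥ 3 and R > 0. Let μ₀ be a Borel probability measure on ℝ^n absolutely continuous with respect to the Lebesgue measure, and μ := μ₀^{⊗N}. Let H be a linear subspace of L² with respect to the measure ρ (defined below), consisting of continuous functions φ : [0,∞) → ℝ supported in [0,R], such that the unit ball {φ ∈ H : ‖φ‖_{L²(ρ)} ≤ 1} is compact in the L²(ρ) norm. Assume that for every nonzero φ ∈ H there exists x in the support of μ₀ with ∫∫ φ(‖x − y‖) φ(‖x − z‖) ⟨y − x, z − x⟩ dμ₀(y) dμ₀(z) > 0. Then c_H := inf { ∫∫∫ φ(‖x − y‖) φ(‖x − z‖) ⟨y − x, z − x⟩ dμ₀(x) dμ₀(y) dμ₀(z) : φ ∈ H, ‖φ‖_{L²(ρ)} = 1 } is strictly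 positive, and for every φ ∈ H one has ‖f_φ‖²_{L²(μ)} ≥ ( (N−1)/N² + c_H (N−1)(N−2)/N² ) ‖φ‖²_{L²(ρ)}. -/
open MeasureTheory Finset Filter
open scoped ENNReal RealInnerProductSpace Topology

/-- The squared `L²(ρ)` norm
`‖φ‖²_{L²(ρ)} = (1/(N(N−1))) ∑_{i≠j} ∫ φ(‖x_i−x_j‖)² ‖x_i−x_j‖² dμ(X)`. -/
noncomputable def rhoSqNorm (n N : ℕ) (μ : Measure (Fin N → EuclideanSpace ℝ (Fin n)))
    (φ : ℝ → ℝ) : ℝ≥0∞ :=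
  ((N * (N - 1) : ℕ) : ℝ≥0∞)⁻¹ *
    ∑ i : Fin N, ∑ j ∈ Finset.univ.erase i,
      ∫⁻ X, ENNReal.ofReal ((φ ‖X i - X j‖) ^ 2 * ‖X i - X j‖ ^ 2) ∂μ

/-- The `L²(ρ)` norm itself. -/
noncomputable def rhoNorm (n N : ℕ) (μ : Measure (Fin N → EuclideanSpace ℝ (Fin n)))
    (φ : ℝ → ℝ) : ℝ :=
  Real.sqrt (rhoSqNorm n N μ φ).toReal

/-- The triple-integral cross term
`G(φ,φ) = ∫∫∫ φ(‖x−y‖)φ(‖x−z‖)⟨y−x, z−x⟩ dμ₀(x)dμ₀(y)dμ₀(z)`. -/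
noncomputable def tripleCross (n : ℕ) (μ₀ : Measure (EuclideanSpace ℝ (Fin n)))
    (φ : ℝ → ℝ) : ℝ :=
  ∫ p : EuclideanSpace ℝ (Fin n) ×
      (EuclideanSpace ℝ (Fin n) × EuclideanSpace ℝ (Fin n)),
    φ ‖p.1 - p.2.1‖ * φ ‖p.1 - p.2.2‖ * ⟪p.2.1 - p.1, p.2.2 - p.1⟫
    ∂(μ₀.prod (μ₀.prod μ₀))

/-!
Write `K φ x = ∫ φ(‖y - x‖) (y - x) dμ₀(y)` for the mean force. Expanding the square and using
the independence of the particles, `‖f_φ‖²_{L²(μ)}` splits into `(N - 1)/N² ‖φ‖²_{L²(ρ)}`, from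
the diagonal terms, plus `(N - 1)(N - 2)/N²` times `G(φ) = ∫ ‖K φ x‖² dμ₀(x)`, from the terms
involving three distinct particles; by Fubini, `G(φ)` is the triple integral of the statement.
Thus `√G` is the `L²(μ₀)` norm of the linear map `φ ↦ K φ`: a seminorm, dominated by
`‖·‖_{L²(ρ)}` (Jensen). The hypothesis on `H` makes `K φ` nonzero at a point of the support of
`μ₀`, so by continuity `√G > 0` on `H \ {0}`. If `G ≥ c ‖·‖²_{L²(ρ)}` failed for every `c > 0`,
a normalised sequence with `G → 0` would have, by compactness, a limit of norm one with `G = 0`.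
-/

open ProbabilityTheory

lemma sum_ite_eq_const_of_mem {ι : Type*} [DecidableEq ι] {s : Finset ι} {j : ι} (hj : j ∈ s)
    (A B : ℝ) : ∑ k ∈ s, (if j = k then A else B) = A + (#s - 1 : ℝ) * B := by
  rw [← add_sum_erase s _ hj, if_pos rfl,
    sum_congr rfl fun k hk => if_neg (ne_of_mem_erase hk).symm, sum_const, card_erase_of_mem hj,
    nsmul_eq_mul, Nat.cast_sub (card_pos.2 ⟨j, hj⟩)]
  push_cast
  ring

lemma sum_sum_erase_sum_erase_ite {ι : Type*} [Fintype ι] [DecidableEq ι] (A B : ℝ) :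
    ∑ i : ι, ∑ j ∈ univ.erase i, ∑ k ∈ univ.erase i, (if j = k then A else B) =
      Fintype.card ι * (Fintype.card ι - 1) * (A + (Fintype.card ι - 2) * B) := by
  have hrow : ∀ i : ι, ∑ j ∈ univ.erase i, ∑ k ∈ univ.erase i, (if j = k then A else B) =
      (Fintype.card ι - 1) * (A + (Fintype.card ι - 2) * B) := fun i => by
    rw [sum_congr rfl fun j hj => sum_ite_eq_const_of_mem hj A B, sum_const, nsmul_eq_mul,
      card_erase_of_mem (mem_univ i), card_univ, Nat.cast_sub (Fintype.card_pos_iff.2 ⟨i⟩)]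
    push_cast
    ring
  rw [sum_congr rfl fun i _ => hrow i, sum_const, card_univ, nsmul_eq_mul]
  ring

lemma sq_norm_sum_eq_sum_sum_inner {ι E : Type*} [NormedAddCommGroup E] [InnerProductSpace ℝ E]
    (s : Finset ι) (v : ι → E) : ‖∑ j ∈ s, v j‖ ^ 2 = ∑ j ∈ s, ∑ k ∈ s, ⟪v j, v k⟫ := by
  rw [← real_inner_self_eq_norm_sq, sum_inner]
  simp_rw [inner_sum]

theorem exists_pos_mul_le_of_seqCompact {V : Type*} [AddCommGroup V] [Module ℝ V]
    (H : Submodule ℝ V) (p q : V → ℝ)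
    (hp_smul : ∀ φ ∈ H, ∀ a : ℝ, p (a • φ) = |a| * p φ)
    (hq_smul : ∀ φ ∈ H, ∀ a : ℝ, q (a • φ) = |a| * q φ)
    (hq_sub : ∀ φ ∈ H, ∀ ψ ∈ H, q (φ - ψ) ≤ q φ + q ψ)
    (hq_le : ∀ φ ∈ H, q φ ≤ p φ)
    (hq_pos : ∀ φ ∈ H, φ ≠ 0 → 0 < q φ)
    (hcompact : ∀ u : ℕ → V, (∀ k, u k ∈ H ∧ p (u k) ≤ 1) →
      ∃ ψ ∈ H, ∃ s : ℕ → ℕ, StrictMono s ∧ Tendsto (fun k => p (u (s k) - ψ)) atTop (𝓝 0)) :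
    ∃ c > 0, ∀ φ ∈ H, c * p φ ≤ q φ := by
  by_contra! h
  have hq_nonneg : ∀ φ ∈ H, 0 ≤ q φ := fun φ hφ => by
    rcases eq_or_ne φ 0 with rfl | hφ0
    · exact (by simpa using hq_smul 0 H.zero_mem 0 : q 0 = 0).ge
    · exact (hq_pos φ hφ hφ0).le
  have hunit : ∀ k : ℕ, ∃ u ∈ H, p u = 1 ∧ q u < 1 / (k + 1) := fun k => by
    obtain ⟨φ, hφ, hlt⟩ := h (1 / (k + 1)) (by positivity)
    have hp : 0 < p φ := pos_of_mul_pos_right ((hq_nonneg φ hφ).trans_lt hlt) (by positivity)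
    refine ⟨(p φ)⁻¹ • φ, H.smul_mem _ hφ, ?_, ?_⟩
    · rw [hp_smul φ hφ, abs_of_pos (inv_pos.2 hp), inv_mul_cancel₀ hp.ne']
    · rw [hq_smul φ hφ, abs_of_pos (inv_pos.2 hp), inv_mul_lt_iff₀ hp, mul_comm]
      exact hlt
  choose u huH hup huq using hunit
  obtain ⟨ψ, hψ, s, hs, hlim⟩ := hcompact u fun k => ⟨huH k, (hup k).le⟩
  have hψ0 : ψ ≠ 0 := by
    rintro rfl
    simp only [sub_zero, hup] at hlim
    exact one_ne_zero (tendsto_nhds_unique tendsto_const_nhds hlim)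
  have hbound : ∀ k, q ψ ≤ 1 / ((s k : ℝ) + 1) + p (u (s k) - ψ) := fun k => by
    have hsub := hq_sub (u (s k)) (huH _) (u (s k) - ψ) (H.sub_mem (huH _) hψ)
    rw [sub_sub_cancel] at hsub
    linarith [huq (s k), hq_le _ (H.sub_mem (huH (s k)) hψ)]
  have hlim' : Tendsto (fun k => 1 / ((s k : ℝ) + 1) + p (u (s k) - ψ)) atTop (𝓝 0) := by
    simpa using (tendsto_one_div_add_atTop_nhds_zero_nat.comp hs.tendsto_atTop).add hlim
  exact (hq_pos ψ hψ hψ0).not_ge (ge_of_tendsto' hlim' hbound)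

section Marginals

variable {α ι : Type*} [MeasurableSpace α] {μ₀ : Measure α} [IsProbabilityMeasure μ₀] [Fintype ι]

lemma iIndepFun_eval_pi : iIndepFun (fun i (X : ι → α) => X i) (Measure.pi fun _ => μ₀) :=
  iIndepFun_pi (X := fun _ => id) fun _ => aemeasurable_id

lemma measurePreserving_eval_prod_eval {i j : ι} (hij : i ≠ j) :
    MeasurePreserving (fun X : ι → α => (X i, X j)) (Measure.pi fun _ => μ₀) (μ₀.prod μ₀) := by
  refine ⟨(measurable_pi_apply i).prodMk (measurable_pi_apply j), ?_⟩
  rw [(iIndepFun_eval_pi.indepFun hij).map_prod_eq_prod_map_map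
    (measurable_pi_apply i).aemeasurable (measurable_pi_apply j).aemeasurable,
    (measurePreserving_eval _ i).map_eq, (measurePreserving_eval _ j).map_eq]

lemma measurePreserving_eval_prod_eval_prod_eval {i j k : ι} (hij : i ≠ j) (hik : i ≠ k)
    (hjk : j ≠ k) :
    MeasurePreserving (fun X : ι → α => (X i, (X j, X k))) (Measure.pi fun _ => μ₀)
      (μ₀.prod (μ₀.prod μ₀)) := by
  have hpair := measurePreserving_eval_prod_eval (μ₀ := μ₀) hjk
  refine ⟨(measurable_pi_apply i).prodMk hpair.measurable, ?_⟩
  rw [(iIndepFun_eval_pi.indepFun_prodMk (fun _ => measurable_pi_apply _) j k i hij.symm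
      hik.symm).symm.map_prod_eq_prod_map_map (measurable_pi_apply i).aemeasurable
      hpair.measurable.aemeasurable,
    (measurePreserving_eval _ i).map_eq, hpair.map_eq]

end Marginals

section L2

variable {α F : Type*} [MeasurableSpace α] {μ : Measure α}
  [NormedAddCommGroup F] [InnerProductSpace ℝ F]

lemma sq_norm_toLp_two {f : α → F} (hf : MemLp f 2 μ) :
    ‖hf.toLp f‖ ^ 2 = ∫ a, ‖f a‖ ^ 2 ∂μ := by
  rw [← real_inner_self_eq_norm_sq, L2.inner_def]
  refine integral_congr_ae ?_
  filter_upwards [hf.coeFn_toLp] with a ha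
  rw [ha, real_inner_self_eq_norm_sq]

lemma sqrt_integral_sq_norm_sub_le {f g : α → F} (hf : MemLp f 2 μ) (hg : MemLp g 2 μ) :
    √(∫ a, ‖f a - g a‖ ^ 2 ∂μ) ≤ √(∫ a, ‖f a‖ ^ 2 ∂μ) + √(∫ a, ‖g a‖ ^ 2 ∂μ) := by
  have hfg := sq_norm_toLp_two (hf.sub hg)
  simp only [Pi.sub_apply] at hfg
  rw [← sq_norm_toLp_two hf, ← sq_norm_toLp_two hg, ← hfg, Real.sqrt_sq (norm_nonneg _),
    Real.sqrt_sq (norm_nonneg _), Real.sqrt_sq (norm_nonneg _), MemLp.toLp_sub]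
  exact norm_sub_le _ _

lemma sq_norm_integral_le_integral_sq_norm [IsProbabilityMeasure μ] {f : α → F}
    (hf : Integrable f μ) (hf2 : Integrable (fun a => ‖f a‖ ^ 2) μ) :
    ‖∫ a, f a ∂μ‖ ^ 2 ≤ ∫ a, ‖f a‖ ^ 2 ∂μ :=
  calc ‖∫ a, f a ∂μ‖ ^ 2 ≤ (∫ a, ‖f a‖ ∂μ) ^ 2 :=
        pow_le_pow_left₀ (norm_nonneg _) (norm_integral_le_integral_norm f) 2
    _ ≤ ∫ a, ‖f a‖ ^ 2 ∂μ :=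
        (even_two.convexOn_pow (𝕜 := ℝ)).map_integral_le (continuous_pow 2).continuousOn
          isClosed_univ (ae_of_all _ fun _ => Set.mem_univ _) hf.norm hf2

lemma integral_prod_inner [CompleteSpace F] {β : Type*} [MeasurableSpace β] {ν : Measure β}
    [SFinite μ] [SFinite ν] {f : α → F} {g : β → F} (hf : Integrable f μ) (hg : Integrable g ν) :
    ∫ z, ⟪f z.1, g z.2⟫ ∂(μ.prod ν) = ⟪∫ x, f x ∂μ, ∫ y, g y ∂ν⟫ := by
  have hint : Integrable (fun z : α × β => ⟪f z.1, g z.2⟫) (μ.prod ν) :=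
    (hf.norm.mul_prod hg.norm).mono' (hf.1.comp_fst.inner hg.1.comp_snd)
      (ae_of_all _ fun _ => norm_inner_le_norm _ _)
  rw [integral_prod _ hint]
  dsimp only
  simp_rw [integral_inner hg]
  simpa only [real_inner_comm (∫ y, g y ∂ν)] using integral_inner hf (∫ y, g y ∂ν)

end L2

section PairForce

variable {E : Type*} [NormedAddCommGroup E] [InnerProductSpace ℝ E] {φ ψ : ℝ → ℝ}

def pairForce (φ : ℝ → ℝ) (x y : E) : E := φ ‖y - x‖ • (y - x)

lemma pairForce_sub (x y : E) : pairForce (φ - ψ) x y = pairForce φ x y - pairForce ψ x y :=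
  sub_smul _ _ _

lemma pairForce_smul (a : ℝ) (x y : E) : pairForce (a • φ) x y = a • pairForce φ x y :=
  mul_smul _ _ _

lemma inner_pairForce_pairForce (x y z : E) :
    ⟪pairForce φ x y, pairForce φ x z⟫ = φ ‖x - y‖ * φ ‖x - z‖ * ⟪y - x, z - x⟫ := by
  simp only [pairForce, real_inner_smul_left, real_inner_smul_right, norm_sub_rev y x,
    norm_sub_rev z x]
  ring

@[fun_prop]
lemma continuous_pairForce {α : Type*} [TopologicalSpace α] {f g : α → E} (hφ : Continuous φ)
    (hf : Continuous f) (hg : Continuous g) : Continuous fun a => pairForce φ (f a) (g a) := by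
  unfold pairForce
  fun_prop

lemma exists_norm_pairForce_le (hφ : Continuous φ) (hφc : HasCompactSupport φ) :
    ∃ C, ∀ x y : E, ‖pairForce φ x y‖ ≤ C := by
  obtain ⟨C, hC⟩ := (hφ.mul continuous_id).bounded_above_of_compact_support hφc.mul_right
  refine ⟨C, fun x y => ?_⟩
  simpa [pairForce, norm_smul] using hC ‖y - x‖

lemma exists_norm_inner_pairForce_le (hφ : Continuous φ) (hφc : HasCompactSupport φ) :
    ∃ C, ∀ x y z : E, ‖⟪pairForce φ x y, pairForce φ x z⟫‖ ≤ C := by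
  obtain ⟨C, hC⟩ := exists_norm_pairForce_le hφ hφc (E := E)
  exact ⟨C * C, fun x y z => (norm_inner_le_norm _ _).trans
    (mul_le_mul (hC x y) (hC x z) (norm_nonneg _) ((norm_nonneg _).trans (hC x y)))⟩

end PairForce

noncomputable section Energies

variable {E : Type*} [NormedAddCommGroup E] [InnerProductSpace ℝ E] [MeasurableSpace E]
  (μ₀ : Measure E)

def meanForce (φ : ℝ → ℝ) (x : E) : E := ∫ y, pairForce φ x y ∂μ₀

/-- `‖φ‖²_{L²(ρ)}` for `μ = μ₀^{⊗N}`. -/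
def pairEnergy (φ : ℝ → ℝ) : ℝ := ∫ p : E × E, ‖pairForce φ p.1 p.2‖ ^ 2 ∂(μ₀.prod μ₀)

def crossEnergy (φ : ℝ → ℝ) : ℝ := ∫ x, ‖meanForce μ₀ φ x‖ ^ 2 ∂μ₀

variable {μ₀} {φ ψ : ℝ → ℝ}

lemma meanForce_smul (a : ℝ) : meanForce μ₀ (a • φ) = a • meanForce μ₀ φ := by
  ext1 x
  simp only [meanForce, pairForce_smul, integral_smul, Pi.smul_apply]

lemma crossEnergy_smul (a : ℝ) : crossEnergy μ₀ (a • φ) = a ^ 2 * crossEnergy μ₀ φ := by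
  simp only [crossEnergy, meanForce_smul, Pi.smul_apply, norm_smul, mul_pow, Real.norm_eq_abs,
    sq_abs, integral_const_mul]

lemma pairEnergy_smul (a : ℝ) : pairEnergy μ₀ (a • φ) = a ^ 2 * pairEnergy μ₀ φ := by
  simp only [pairEnergy, pairForce_smul, norm_smul, mul_pow, Real.norm_eq_abs, sq_abs,
    integral_const_mul]

lemma pairEnergy_nonneg : 0 ≤ pairEnergy μ₀ φ :=
  integral_nonneg fun _ => sq_nonneg _

variable [BorelSpace E] [SecondCountableTopology E] [IsProbabilityMeasure μ₀]

lemma integrable_pairForce (hφ : Continuous φ) (hφc : HasCompactSupport φ) (x : E) :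
    Integrable (pairForce φ x) μ₀ := by
  obtain ⟨C, hC⟩ := exists_norm_pairForce_le hφ hφc (E := E)
  exact .of_bound (by fun_prop) C (ae_of_all _ (hC x))

lemma integrable_sq_norm_pairForce (hφ : Continuous φ) (hφc : HasCompactSupport φ) :
    Integrable (fun p : E × E => ‖pairForce φ p.1 p.2‖ ^ 2) (μ₀.prod μ₀) := by
  obtain ⟨C, hC⟩ := exists_norm_pairForce_le hφ hφc (E := E)
  refine .of_bound (by fun_prop) (C ^ 2) (ae_of_all _ fun p => ?_)
  rw [norm_pow, norm_norm]
  exact pow_le_pow_left₀ (norm_nonneg _) (hC p.1 p.2) 2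

lemma integrable_inner_pairForce_eval {ι : Type*} [Fintype ι] (hφ : Continuous φ)
    (hφc : HasCompactSupport φ) (i j k : ι) :
    Integrable (fun X : ι → E => ⟪pairForce φ (X i) (X j), pairForce φ (X i) (X k)⟫)
      (Measure.pi fun _ => μ₀) := by
  obtain ⟨C, hC⟩ := exists_norm_inner_pairForce_le hφ hφc (E := E)
  exact .of_bound (by fun_prop) C (ae_of_all _ fun X => hC _ _ _)

lemma integrable_sum_sq_norm_sum_pairForce {ι : Type*} [Fintype ι] [DecidableEq ι]
    (hφ : Continuous φ) (hφc : HasCompactSupport φ) :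
    Integrable (fun X : ι → E => ∑ i, ‖∑ j ∈ univ.erase i, pairForce φ (X i) (X j)‖ ^ 2)
      (Measure.pi fun _ => μ₀) := by
  simp_rw [sq_norm_sum_eq_sum_sum_inner]
  exact integrable_finsetSum _ fun i _ => integrable_finsetSum _ fun j _ =>
    integrable_finsetSum _ fun k _ => integrable_inner_pairForce_eval hφ hφc i j k

lemma meanForce_sub (hφ : Continuous φ) (hφc : HasCompactSupport φ) (hψ : Continuous ψ)
    (hψc : HasCompactSupport ψ) : meanForce μ₀ (φ - ψ) = meanForce μ₀ φ - meanForce μ₀ ψ := by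
  ext1 x
  simp only [meanForce, pairForce_sub, Pi.sub_apply]
  exact integral_sub (integrable_pairForce hφ hφc x) (integrable_pairForce hψ hψc x)

lemma continuous_meanForce (hφ : Continuous φ) (hφc : HasCompactSupport φ) :
    Continuous (meanForce μ₀ φ) := by
  obtain ⟨C, hC⟩ := exists_norm_pairForce_le hφ hφc (E := E)
  exact continuous_of_dominated (fun x => by fun_prop) (fun x => ae_of_all _ (hC x))
    (integrable_const C) (ae_of_all _ fun y => by fun_prop)

lemma memLp_meanForce (hφ : Continuous φ) (hφc : HasCompactSupport φ) :
    MemLp (meanForce μ₀ φ) 2 μ₀ := by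
  obtain ⟨C, hC⟩ := exists_norm_pairForce_le hφ hφc (E := E)
  refine .of_bound (continuous_meanForce hφ hφc).aestronglyMeasurable C (ae_of_all _ fun x => ?_)
  simpa [meanForce] using norm_integral_le_of_norm_le_const (μ := μ₀) (ae_of_all _ (hC x))

lemma crossEnergy_le_pairEnergy (hφ : Continuous φ) (hφc : HasCompactSupport φ) :
    crossEnergy μ₀ φ ≤ pairEnergy μ₀ φ := by
  have hint := integrable_sq_norm_pairForce (μ₀ := μ₀) hφ hφc
  rw [pairEnergy, integral_prod _ hint]
  refine integral_mono_ae (memLp_meanForce hφ hφc).integrable_norm_pow'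
    hint.integral_prod_left ?_
  filter_upwards [hint.prod_right_ae] with x hx
  exact sq_norm_integral_le_integral_sq_norm (integrable_pairForce hφ hφc x) hx

lemma sqrt_crossEnergy_sub_le (hφ : Continuous φ) (hφc : HasCompactSupport φ)
    (hψ : Continuous ψ) (hψc : HasCompactSupport ψ) :
    √(crossEnergy μ₀ (φ - ψ)) ≤ √(crossEnergy μ₀ φ) + √(crossEnergy μ₀ ψ) := by
  rw [crossEnergy, meanForce_sub hφ hφc hψ hψc]
  exact sqrt_integral_sq_norm_sub_le (memLp_meanForce hφ hφc) (memLp_meanForce hψ hψc)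

lemma crossEnergy_pos (hφ : Continuous φ) (hφc : HasCompactSupport φ) {x : E}
    (hx : ∀ U ∈ 𝓝 x, 0 < μ₀ U) (hKx : 0 < ‖meanForce μ₀ φ x‖ ^ 2) : 0 < crossEnergy μ₀ φ := by
  have hcont : Continuous fun x => ‖meanForce μ₀ φ x‖ ^ 2 :=
    (continuous_meanForce hφ hφc).norm.pow 2
  rw [crossEnergy, integral_pos_iff_support_of_nonneg (fun _ => sq_nonneg _)
    (memLp_meanForce hφ hφc).integrable_norm_pow']
  exact hx _ (hcont.isOpen_support.mem_nhds hKx.ne')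

variable [CompleteSpace E]

lemma integral_inner_pairForce_eq_sq_norm_meanForce (hφ : Continuous φ)
    (hφc : HasCompactSupport φ) (x : E) :
    ∫ q : E × E, ⟪pairForce φ x q.1, pairForce φ x q.2⟫ ∂(μ₀.prod μ₀) =
      ‖meanForce μ₀ φ x‖ ^ 2 := by
  rw [integral_prod_inner (integrable_pairForce hφ hφc x) (integrable_pairForce hφ hφc x),
    real_inner_self_eq_norm_sq]
  rfl

lemma integral_inner_pairForce_eq_crossEnergy (hφ : Continuous φ) (hφc : HasCompactSupport φ) :
    ∫ p : E × (E × E), ⟪pairForce φ p.1 p.2.1, pairForce φ p.1 p.2.2⟫ ∂(μ₀.prod (μ₀.prod μ₀)) =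
      crossEnergy μ₀ φ := by
  obtain ⟨C, hC⟩ := exists_norm_inner_pairForce_le hφ hφc (E := E)
  have hint : Integrable (fun p : E × (E × E) => ⟪pairForce φ p.1 p.2.1, pairForce φ p.1 p.2.2⟫)
      (μ₀.prod (μ₀.prod μ₀)) :=
    .of_bound (by fun_prop) C (ae_of_all _ fun p => hC _ _ _)
  rw [integral_prod _ hint]
  simp_rw [integral_inner_pairForce_eq_sq_norm_meanForce hφ hφc]
  rfl

theorem exists_pos_mul_pairEnergy_le_crossEnergy (H : Submodule ℝ (ℝ → ℝ))
    (hreg : ∀ φ ∈ H, Continuous φ ∧ HasCompactSupport φ) (p : (ℝ → ℝ) → ℝ)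
    (hp : ∀ φ ∈ H, p φ = √(pairEnergy μ₀ φ))
    (hpos : ∀ φ ∈ H, φ ≠ 0 → ∃ x : E, (∀ U ∈ 𝓝 x, 0 < μ₀ U) ∧
      0 < ∫ q : E × E, φ ‖x - q.1‖ * φ ‖x - q.2‖ * ⟪q.1 - x, q.2 - x⟫ ∂(μ₀.prod μ₀))
    (hcompact : ∀ u : ℕ → (ℝ → ℝ), (∀ k, u k ∈ H ∧ p (u k) ≤ 1) →
      ∃ ψ ∈ H, ∃ s : ℕ → ℕ, StrictMono s ∧ Tendsto (fun k => p (u (s k) - ψ)) atTop (𝓝 0)) :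
    ∃ c > 0, ∀ φ ∈ H, c * pairEnergy μ₀ φ ≤ crossEnergy μ₀ φ := by
  have hsqrt_smul (a e : ℝ) : √(a ^ 2 * e) = |a| * √e := by
    rw [Real.sqrt_mul (sq_nonneg a), Real.sqrt_sq_eq_abs]
  have hq_pos : ∀ φ ∈ H, φ ≠ 0 → 0 < √(crossEnergy μ₀ φ) := fun φ hφH hφ0 => by
    obtain ⟨hφ, hφc⟩ := hreg φ hφH
    obtain ⟨x, hx, hKx⟩ := hpos φ hφH hφ0
    simp_rw [← inner_pairForce_pairForce, integral_inner_pairForce_eq_sq_norm_meanForce hφ hφc]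
      at hKx
    exact Real.sqrt_pos.2 (crossEnergy_pos hφ hφc hx hKx)
  obtain ⟨c, hc, hcH⟩ := exists_pos_mul_le_of_seqCompact H p (fun φ => √(crossEnergy μ₀ φ))
    (fun φ hφ a => by rw [hp _ (H.smul_mem a hφ), hp φ hφ, pairEnergy_smul, hsqrt_smul])
    (fun φ _ a => by simp only [crossEnergy_smul, hsqrt_smul])
    (fun φ hφ ψ hψ => sqrt_crossEnergy_sub_le (hreg φ hφ).1 (hreg φ hφ).2 (hreg ψ hψ).1
      (hreg ψ hψ).2)
    (fun φ hφ => (hp φ hφ).symm ▸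
      Real.sqrt_le_sqrt (crossEnergy_le_pairEnergy (hreg φ hφ).1 (hreg φ hφ).2))
    hq_pos hcompact
  refine ⟨c ^ 2, by positivity, fun φ hφ => ?_⟩
  have h := (Real.le_sqrt (by positivity) (integral_nonneg fun _ => sq_nonneg _)).1
    ((hp φ hφ).symm ▸ hcH φ hφ)
  rwa [mul_pow, Real.sq_sqrt pairEnergy_nonneg] at h

lemma integral_inner_pairForce_eval {ι : Type*} [Fintype ι] [DecidableEq ι]
    (hφ : Continuous φ) (hφc : HasCompactSupport φ) {i j k : ι} (hij : i ≠ j) (hik : i ≠ k) :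
    ∫ X : ι → E, ⟪pairForce φ (X i) (X j), pairForce φ (X i) (X k)⟫ ∂(Measure.pi fun _ => μ₀) =
      if j = k then pairEnergy μ₀ φ else crossEnergy μ₀ φ := by
  split_ifs with hjk
  · subst hjk
    have hmp := measurePreserving_eval_prod_eval (μ₀ := μ₀) hij
    simp_rw [real_inner_self_eq_norm_sq]
    rw [pairEnergy, ← hmp.map_eq, integral_map hmp.measurable.aemeasurable (by fun_prop)]
  · have hmp := measurePreserving_eval_prod_eval_prod_eval (μ₀ := μ₀) hij hik hjk
    rw [← integral_inner_pairForce_eq_crossEnergy hφ hφc, ← hmp.map_eq,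
      integral_map hmp.measurable.aemeasurable (by fun_prop)]

lemma integral_sum_sq_norm_sum_pairForce {ι : Type*} [Fintype ι] [DecidableEq ι]
    (hφ : Continuous φ) (hφc : HasCompactSupport φ) :
    ∫ X : ι → E, ∑ i, ‖∑ j ∈ univ.erase i, pairForce φ (X i) (X j)‖ ^ 2
        ∂(Measure.pi fun _ => μ₀) =
      Fintype.card ι * (Fintype.card ι - 1) *
        (pairEnergy μ₀ φ + (Fintype.card ι - 2) * crossEnergy μ₀ φ) := by
  have hint := integrable_inner_pairForce_eval (μ₀ := μ₀) hφ hφc (ι := ι)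
  have hrow : ∀ i : ι, ∫ X : ι → E, ∑ j ∈ univ.erase i, ∑ k ∈ univ.erase i,
        ⟪pairForce φ (X i) (X j), pairForce φ (X i) (X k)⟫ ∂(Measure.pi fun _ => μ₀) =
      ∑ j ∈ univ.erase i, ∑ k ∈ univ.erase i,
        (if j = k then pairEnergy μ₀ φ else crossEnergy μ₀ φ) := fun i => by
    rw [integral_finsetSum _ fun j _ => integrable_finsetSum _ fun k _ => hint i j k]
    refine sum_congr rfl fun j hj => ?_
    rw [integral_finsetSum _ fun k _ => hint i j k]
    exact sum_congr rfl fun k hk =>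
      integral_inner_pairForce_eval hφ hφc (ne_of_mem_erase hj).symm (ne_of_mem_erase hk).symm
  simp_rw [sq_norm_sum_eq_sum_sum_inner]
  rw [integral_finsetSum _ fun i _ => integrable_finsetSum _ fun j _ =>
      integrable_finsetSum _ fun k _ => hint i j k,
    sum_congr rfl fun i _ => hrow i, sum_sum_erase_sum_erase_ite]

end Energies

section EuclideanInteraction

variable {n N : ℕ} {μ₀ : Measure (EuclideanSpace ℝ (Fin n))} [IsProbabilityMeasure μ₀]
  {φ : ℝ → ℝ}

lemma tripleCross_eq_crossEnergy (hφ : Continuous φ) (hφc : HasCompactSupport φ) :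
    tripleCross n μ₀ φ = crossEnergy μ₀ φ := by
  simp_rw [← integral_inner_pairForce_eq_crossEnergy hφ hφc, inner_pairForce_pairForce]
  rfl

lemma rhoSqNorm_pi (hN : 2 ≤ N) (hφ : Continuous φ) (hφc : HasCompactSupport φ) :
    rhoSqNorm n N (Measure.pi fun _ => μ₀) φ = ENNReal.ofReal (pairEnergy μ₀ φ) := by
  have hpair : ∀ i j : Fin N, i ≠ j →
      ∫⁻ X, ENNReal.ofReal ((φ ‖X i - X j‖) ^ 2 * ‖X i - X j‖ ^ 2)
        ∂(Measure.pi fun _ => μ₀) = ENNReal.ofReal (pairEnergy μ₀ φ) := fun i j hij => by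
    have hmp := measurePreserving_eval_prod_eval (μ₀ := μ₀) hij.symm
    rw [pairEnergy, ofReal_integral_eq_lintegral_ofReal (integrable_sq_norm_pairForce hφ hφc)
      (ae_of_all _ fun _ => sq_nonneg _), ← hmp.map_eq, lintegral_map (by fun_prop) hmp.measurable]
    simp [pairForce, norm_smul, mul_pow]
  unfold rhoSqNorm
  rw [sum_congr rfl fun i _ => sum_congr rfl fun j hj => hpair i j (ne_of_mem_erase hj).symm]
  simp only [sum_const, card_erase_of_mem (mem_univ _), card_univ, Fintype.card_fin, smul_smul]
  have hNN : ((N * (N - 1) : ℕ) : ℝ≥0∞) ≠ 0 := by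
    norm_cast
    exact Nat.mul_ne_zero (by omega) (by omega)
  rw [nsmul_eq_mul, ← mul_assoc, ENNReal.inv_mul_cancel hNN (ENNReal.natCast_ne_top _), one_mul]

lemma rhoNorm_pi (hN : 2 ≤ N) (hφ : Continuous φ) (hφc : HasCompactSupport φ) :
    rhoNorm n N (Measure.pi fun _ => μ₀) φ = √(pairEnergy μ₀ φ) := by
  rw [rhoNorm, rhoSqNorm_pi hN hφ hφc, ENNReal.toReal_ofReal pairEnergy_nonneg]

lemma interactionField_eq_smul_sum_pairForce (X : Fin N → EuclideanSpace ℝ (Fin n)) (i : Fin N) :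
    interactionField n N φ X i = (N : ℝ)⁻¹ • ∑ j ∈ univ.erase i, pairForce φ (X i) (X j) :=
  rfl

lemma lintegral_interactionField (hφ : Continuous φ) (hφc : HasCompactSupport φ) :
    ∫⁻ X, ENNReal.ofReal ((N : ℝ)⁻¹ * ∑ i : Fin N, ‖interactionField n N φ X i‖ ^ 2)
        ∂(Measure.pi fun _ => μ₀) =
      ENNReal.ofReal (((N : ℝ) - 1) / (N : ℝ) ^ 2 * pairEnergy μ₀ φ +
        ((N : ℝ) - 1) * ((N : ℝ) - 2) / (N : ℝ) ^ 2 * crossEnergy μ₀ φ) := by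
  have hfield : ∀ X : Fin N → EuclideanSpace ℝ (Fin n),
      (N : ℝ)⁻¹ * ∑ i, ‖interactionField n N φ X i‖ ^ 2 =
        (N : ℝ)⁻¹ ^ 3 * ∑ i, ‖∑ j ∈ univ.erase i, pairForce φ (X i) (X j)‖ ^ 2 := fun X => by
    simp only [interactionField_eq_smul_sum_pairForce, norm_smul, mul_pow, ← mul_sum,
      Real.norm_eq_abs, sq_abs]
    ring
  simp_rw [hfield]
  rw [← ofReal_integral_eq_lintegral_ofReal
      ((integrable_sum_sq_norm_sum_pairForce hφ hφc).const_mul _)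
      (ae_of_all _ fun _ => by positivity),
    integral_const_mul, integral_sum_sq_norm_sum_pairForce hφ hφc, Fintype.card_fin]
  congr 1
  rcases eq_or_ne (N : ℝ) 0 with hN0 | hN0
  · simp [hN0]
  · field_simp

end EuclideanInteraction

theorem interactionField_coercivity_compact_subspace_general
    (n N : ℕ) (hN : 3 ≤ N) (R : ℝ)
    (μ₀ : Measure (EuclideanSpace ℝ (Fin n))) [IsProbabilityMeasure μ₀]
    (μ : Measure (Fin N → EuclideanSpace ℝ (Fin n)))
    (hμ : μ = Measure.pi fun _ : Fin N => μ₀)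
    (H : Submodule ℝ (ℝ → ℝ))
    (hcont : ∀ φ ∈ H, Continuous φ)
    (hsupp : ∀ φ ∈ H, ∀ t : ℝ, φ t ≠ 0 → t ∈ Set.Icc (0 : ℝ) R)
    -- the unit ball of `H` is compact in the `L²(ρ)` norm (sequential compactness)
    (hcompact : ∀ u : ℕ → (ℝ → ℝ), (∀ k, u k ∈ H ∧ rhoNorm n N μ (u k) ≤ 1) →
      ∃ ψ ∈ H, ∃ s : ℕ → ℕ, StrictMono s ∧
        Tendsto (fun k => rhoNorm n N μ (u (s k) - ψ)) atTop (𝓝 0))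
    -- for every nonzero `φ ∈ H` there is `x ∈ supp μ₀` with strictly positive
    -- conditional cross term
    (hpos : ∀ φ ∈ H, φ ≠ 0 → ∃ x : EuclideanSpace ℝ (Fin n),
      (∀ U ∈ 𝓝 x, 0 < μ₀ U) ∧
      0 < ∫ p : EuclideanSpace ℝ (Fin n) × EuclideanSpace ℝ (Fin n),
          φ ‖x - p.1‖ * φ ‖x - p.2‖ * ⟪p.1 - x, p.2 - x⟫ ∂(μ₀.prod μ₀)) :
    ∃ c : ℝ, 0 < c ∧
      (∀ φ ∈ H, rhoNorm n N μ φ = 1 → c ≤ tripleCross n μ₀ φ) ∧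
      ∀ φ ∈ H,
        ∫⁻ X, ENNReal.ofReal
            ((N : ℝ)⁻¹ * ∑ i : Fin N, ‖interactionField n N φ X i‖ ^ 2) ∂μ ≥
          ENNReal.ofReal (((N : ℝ) - 1) / (N : ℝ) ^ 2 +
              c * (((N : ℝ) - 1) * ((N : ℝ) - 2) / (N : ℝ) ^ 2)) *
            rhoSqNorm n N μ φ := by
  subst hμ
  have hreg : ∀ φ ∈ H, Continuous φ ∧ HasCompactSupport φ := fun φ hφ =>
    ⟨hcont φ hφ, .intro isCompact_Icc fun t ht => by_contra fun h => ht (hsupp φ hφ t h)⟩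
  obtain ⟨c, hc, hcH⟩ := exists_pos_mul_pairEnergy_le_crossEnergy H hreg _
    (fun φ hφ => rhoNorm_pi (by omega) (hreg φ hφ).1 (hreg φ hφ).2) hpos hcompact
  refine ⟨c, hc, fun φ hφ hφ1 => ?_, fun φ hφ => ?_⟩
  · rw [rhoNorm_pi (by omega) (hreg φ hφ).1 (hreg φ hφ).2, Real.sqrt_eq_one] at hφ1
    simpa [hφ1, tripleCross_eq_crossEnergy (hreg φ hφ).1 (hreg φ hφ).2] using hcH φ hφ
  · rw [lintegral_interactionField (hreg φ hφ).1 (hreg φ hφ).2,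
      rhoSqNorm_pi (by omega) (hreg φ hφ).1 (hreg φ hφ).2, ← ENNReal.ofReal_mul' pairEnergy_nonneg]
    refine ENNReal.ofReal_le_ofReal ?_
    have hN' : (3 : ℝ) ≤ N := by exact_mod_cast hN
    have hb : 0 ≤ ((N : ℝ) - 1) * ((N : ℝ) - 2) / (N : ℝ) ^ 2 :=
      div_nonneg (mul_nonneg (by linarith) (by linarith)) (sq_nonneg _)
    nlinarith [mul_le_mul_of_nonneg_left (hcH φ hφ) hb]

/-- improved coercivity on a compact hypothesis space `H` of continuous
kernels supported in `[0,R]`: the constant `c_H` (the infimum of the cross term over the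
unit sphere of `H`) is strictly positive and
`‖f_φ‖²_{L²(μ)} ≥ ((N−1)/N² + c_H (N−1)(N−2)/N²) ‖φ‖²_{L²(ρ)}` for all `φ ∈ H`. -/
theorem interactionField_coercivity_compact_subspace
    (n N : ℕ) (hn : 1 ≤ n) (hN : 3 ≤ N) (R : ℝ) (hR : 0 < R)
    (μ₀ : Measure (EuclideanSpace ℝ (Fin n))) [IsProbabilityMeasure μ₀]
    (hμ₀ : μ₀ ≪ volume)
    (μ : Measure (Fin N → EuclideanSpace ℝ (Fin n)))
    (hμ : μ = Measure.pi fun _ : Fin N => μ₀)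
    (H : Submodule ℝ (ℝ → ℝ))
    (hcont : ∀ φ ∈ H, Continuous φ)
    (hsupp : ∀ φ ∈ H, ∀ t : ℝ, φ t ≠ 0 → t ∈ Set.Icc (0 : ℝ) R)
    -- the unit ball of `H` is compact in the `L²(ρ)` norm (sequential compactness)
    (hcompact : ∀ u : ℕ → (ℝ → ℝ), (∀ k, u k ∈ H ∧ rhoNorm n N μ (u k) ≤ 1) →
      ∃ ψ ∈ H, ∃ s : ℕ → ℕ, StrictMono s ∧
        Tendsto (fun k => rhoNorm n N μ (u (s k) - ψ)) atTop (𝓝 0))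
    -- for every nonzero `φ ∈ H` there is `x ∈ supp μ₀` with strictly positive
    -- conditional cross term
    (hpos : ∀ φ ∈ H, φ ≠ 0 → ∃ x : EuclideanSpace ℝ (Fin n),
      (∀ U ∈ 𝓝 x, 0 < μ₀ U) ∧
      0 < ∫ p : EuclideanSpace ℝ (Fin n) × EuclideanSpace ℝ (Fin n),
          φ ‖x - p.1‖ * φ ‖x - p.2‖ * ⟪p.1 - x, p.2 - x⟫ ∂(μ₀.prod μ₀)) :
    ∃ c : ℝ, 0 < c ∧
      (∀ φ ∈ H, rhoNorm n N μ φ = 1 → c ≤ tripleCross n μ₀ φ) ∧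
      ∀ φ ∈ H,
        ∫⁻ X, ENNReal.ofReal
            ((N : ℝ)⁻¹ * ∑ i : Fin N, ‖interactionField n N φ X i‖ ^ 2) ∂μ ≥
          ENNReal.ofReal (((N : ℝ) - 1) / (N : ℝ) ^ 2 +
              c * (((N : ℝ) - 1) * ((N : ℝ) - 2) / (N : ℝ) ^ 2)) *
            rhoSqNorm n N μ φ :=
  interactionField_coercivity_compact_subspace_general n N hN R μ₀ μ hμ H hcont hsupp hcompact hpos
end
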